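/- The following second-order differential identity of formal power series in ℚ[[q]] holds for the extra generator 𝒬: (d/du)²𝒬 = −2𝒳·(d/du)𝒬 − (4𝒳₂ + 2𝒳² + (15/4)𝒵₂)·𝒬 − (5/2)(2𝒵₁𝒳₂ + 𝒵₁𝒳² + 𝒵₂𝒳) − (125/24)𝒵₁𝒵₂ − (5/24)𝒵₃. -/

import Mathlib

/-!
With `θ = q·d/dq`, `I₀` satisfies the quintic Picard–Fuchs equation
`θ⁴ I₀ = 5q (5θ+1)(5θ+2)(5θ+3)(5θ+4) I₀`, and `I_{1;a}` satisfies the same equation with an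
inhomogeneous term built from `I₀`. For `f = I_{1;a}/I₀` this pair of fourth-order equations has
a first integral, quadratic in `I₀, θI₀, θ²I₀` and affine in `θf, θ²f, θ³f`; it vanishes at
`q = 0`, hence identically, and this is a second-order equation for `I_{1,1;a} = θf`.

Since `θL = L(L⁵ - 1)/5`, a generator of weight `k` is `L⁻ᵏ` times a polynomial in `L⁵`,
`θI₀/I₀`, `θ²I₀/I₀` and the `θʲ I_{1,1;a}`, and `d/du` raises the weight by one. After this
reduction the difference of the two sides of the identity is `L²/(50 I₀²)` times the first
integral.
-/

noncomputable section

/-- The operator `q·d/dq` on formal power series in `q`. -/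
def qd (f : PowerSeries ℚ) : PowerSeries ℚ :=
  PowerSeries.mk fun n => (n : ℚ) * PowerSeries.coeff n f

/-- `I₀(q) = Σ_{d≥0} ((5d)!/(d!)⁵) q^d`. -/
def I0 : PowerSeries ℚ :=
  PowerSeries.mk fun d => (Nat.factorial (5 * d) : ℚ) / ((Nat.factorial d : ℚ)) ^ 5

/-- `I₁(q) = Σ_{d≥1} ((5d)!/(d!)⁵)(5 Σ_{j=d+1}^{5d} 1/j) q^d`. -/
def I1 : PowerSeries ℚ :=
  PowerSeries.mk fun d =>
    (Nat.factorial (5 * d) : ℚ) / ((Nat.factorial d : ℚ)) ^ 5 *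
      (5 * ∑ j ∈ Finset.Icc (d + 1) (5 * d), (1 : ℚ) / j)

/-- `I_{1,1} = 1 + q·d/dq (I₁/I₀)`. -/
def I11 : PowerSeries ℚ := 1 + qd (I1 * I0⁻¹)

/-- The operator `d/du = (1/L)·q·d/dq`. -/
def du (L f : PowerSeries ℚ) : PowerSeries ℚ := L⁻¹ * qd f

/-- The generators `𝒳_k`: `𝒳₁ = (d/du) log(I₀/L)` and `𝒳_{k+1} = (d/du) 𝒳_k`. -/
def Xg (L : PowerSeries ℚ) : ℕ → PowerSeries ℚ
  | 0 => 0
  | 1 => L⁻¹ * (qd I0 * I0⁻¹ - qd L * L⁻¹)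
  | (k + 2) => du L (Xg L (k + 1))

/-- The generators `𝒴_k`: `𝒴₁ = (d/du) log(I₀·I_{1,1}/L²)` and `𝒴_{k+1} = (d/du) 𝒴_k`. -/
def Yg (L : PowerSeries ℚ) : ℕ → PowerSeries ℚ
  | 0 => 0
  | 1 => L⁻¹ * (qd I0 * I0⁻¹ + qd I11 * I11⁻¹ - 2 * (qd L * L⁻¹))
  | (k + 2) => du L (Yg L (k + 1))

/-- The generators `𝒵_k`: `𝒵₁ = (d/du) log(q^{1/5}·L)` and `𝒵_{k+1} = (d/du) 𝒵_k`. -/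
def Zg (L : PowerSeries ℚ) : ℕ → PowerSeries ℚ
  | 0 => 0
  | 1 => L⁻¹ * (qd L * L⁻¹ + PowerSeries.C (1 / 5 : ℚ))
  | (k + 2) => du L (Zg L (k + 1))


/-- `I_{1;a}(q) = -Σ_{d≥1} ((5d)!/(d!)⁵)(Σ_{j=1}^{5d} 1/j) q^d`. -/
def I1a : PowerSeries ℚ :=
  PowerSeries.mk fun d =>
    -((Nat.factorial (5 * d) : ℚ) / ((Nat.factorial d : ℚ)) ^ 5 *
      ∑ j ∈ Finset.Icc 1 (5 * d), (1 : ℚ) / j)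

/-- `I_{1,1;a} = q·d/dq (I_{1;a}/I₀)`. -/
def I11a : PowerSeries ℚ := qd (I1a * I0⁻¹)

/-- The extra generator `𝒬 = (1/L)(I_{1,1;a} - 1/5)`. -/
def Qg (L : PowerSeries ℚ) : PowerSeries ℚ :=
  L⁻¹ * (I11a - PowerSeries.C (1 / 5 : ℚ))

open PowerSeries

local notation "θ" => qd

theorem coeff_qd (n : ℕ) (f : ℚ⟦X⟧) : coeff n (θ f) = n * coeff n f :=
  coeff_mk _ _

theorem constantCoeff_qd (f : ℚ⟦X⟧) : constantCoeff (θ f) = 0 := by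
  rw [← coeff_zero_eq_constantCoeff_apply, coeff_qd, Nat.cast_zero, zero_mul]

theorem qd_eq_X_mul_derivative (f : ℚ⟦X⟧) : θ f = X * d⁄dX ℚ f := by
  ext (_ | n)
  · simp [coeff_qd]
  · rw [coeff_qd, coeff_succ_X_mul, coeff_derivative]
    push_cast
    ring

theorem qd_add (f g : ℚ⟦X⟧) : θ (f + g) = θ f + θ g := by
  simp only [qd_eq_X_mul_derivative, map_add, mul_add]

theorem qd_sub (f g : ℚ⟦X⟧) : θ (f - g) = θ f - θ g := by
  simp only [qd_eq_X_mul_derivative, map_sub, mul_sub]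

theorem qd_mul (f g : ℚ⟦X⟧) : θ (f * g) = θ f * g + f * θ g := by
  simp only [qd_eq_X_mul_derivative, Derivation.leibniz, smul_eq_mul]
  ring

theorem qd_pow (f : ℚ⟦X⟧) (n : ℕ) : θ (f ^ n) = n * f ^ (n - 1) * θ f := by
  simp only [qd_eq_X_mul_derivative, Derivation.leibniz_pow, smul_eq_mul, nsmul_eq_mul]
  ring

theorem qd_inv (f : ℚ⟦X⟧) : θ f⁻¹ = -(f⁻¹ ^ 2 * θ f) := by
  simp only [qd_eq_X_mul_derivative, derivative_inv']
  ring

theorem qd_C (r : ℚ) : θ (C r) = 0 := by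
  simp [qd_eq_X_mul_derivative]

theorem qd_zero : θ (0 : ℚ⟦X⟧) = 0 := by
  simp [qd_eq_X_mul_derivative]

theorem qd_one : θ (1 : ℚ⟦X⟧) = 0 := by
  rw [← map_one C, qd_C]

theorem qd_natCast (n : ℕ) : θ (n : ℚ⟦X⟧) = 0 := by
  rw [← map_natCast C, qd_C]

theorem qd_ofNat (n : ℕ) [n.AtLeastTwo] : θ (no_index (OfNat.ofNat n) : ℚ⟦X⟧) = 0 := by
  rw [← map_ofNat C, qd_C]

theorem qd_X : θ (X : ℚ⟦X⟧) = X := by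
  simp [qd_eq_X_mul_derivative]

theorem eq_zero_of_qd_eq_zero {f : ℚ⟦X⟧} (hf : θ f = 0) (h0 : constantCoeff f = 0) : f = 0 := by
  ext (_ | n)
  · simpa using h0
  · simpa [coeff_qd, Nat.cast_add_one_ne_zero] using congrArg (coeff (n + 1)) hf

theorem coeff_ofNat_mul (n : ℕ) (f : ℚ⟦X⟧) (k : ℕ) [k.AtLeastTwo] :
    coeff n ((no_index (OfNat.ofNat k) : ℚ⟦X⟧) * f) = OfNat.ofNat k * coeff n f := by
  rw [← map_ofNat C, coeff_C_mul]

def picardFuchs (y : ℚ⟦X⟧) : ℚ⟦X⟧ :=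
  θ (θ (θ (θ y))) -
    X * (3125 * θ (θ (θ (θ y))) + 6250 * θ (θ (θ y)) + 4375 * θ (θ y) + 1250 * θ y + 120 * y)

/-- `1250 (10θ³ + 15θ² + 7θ + 1)` is the `θ`-derivative of the operator
`5 (5θ+1)(5θ+2)(5θ+3)(5θ+4)` of `picardFuchs`. -/
def picardFuchsSource (y : ℚ⟦X⟧) : ℚ⟦X⟧ :=
  θ (θ (θ y)) + 1250 * X * (10 * θ (θ (θ y)) + 15 * θ (θ y) + 7 * θ y + y)

theorem factorial_five_mul_succ (n : ℕ) :
    ((5 * (n + 1)).factorial : ℚ) =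
      (5 * n + 1) * (5 * n + 2) * (5 * n + 3) * (5 * n + 4) * (5 * n + 5) * (5 * n).factorial := by
  rw [show 5 * (n + 1) = 5 * n + 4 + 1 by ring]
  simp only [Nat.factorial_succ]
  push_cast
  ring

theorem coeff_I0_succ (n : ℕ) :
    ((n : ℚ) + 1) ^ 4 * coeff (n + 1) I0 =
      5 * (5 * n + 1) * (5 * n + 2) * (5 * n + 3) * (5 * n + 4) * coeff n I0 := by
  simp only [I0, coeff_mk, factorial_five_mul_succ, Nat.factorial_succ]
  have hfact : (n.factorial : ℚ) ≠ 0 := by positivity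
  push_cast
  field_simp

theorem harmonic_five_mul_succ (n : ℕ) :
    ∑ j ∈ Finset.Icc 1 (5 * (n + 1)), (1 : ℚ) / j = ∑ j ∈ Finset.Icc 1 (5 * n), (1 : ℚ) / j +
      (1 / (5 * n + 1) + 1 / (5 * n + 2) + 1 / (5 * n + 3) + 1 / (5 * n + 4) + 1 / (5 * n + 5)) := by
  rw [show 5 * (n + 1) = 5 * n + 4 + 1 by ring]
  rw [Finset.sum_Icc_succ_top (by omega), Finset.sum_Icc_succ_top (by omega),
    Finset.sum_Icc_succ_top (by omega), Finset.sum_Icc_succ_top (by omega),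
    Finset.sum_Icc_succ_top (by omega)]
  push_cast
  ring

theorem picardFuchs_I0 : picardFuchs I0 = 0 := by
  ext (_ | n)
  · simp [picardFuchs, constantCoeff_qd]
  · simp only [picardFuchs, map_sub, map_add, coeff_succ_X_mul, coeff_ofNat_mul, coeff_qd, map_zero]
    push_cast
    linear_combination coeff_I0_succ n

theorem picardFuchs_I1a : 5 * picardFuchs I1a = -picardFuchsSource I0 := by
  ext (_ | n)
  · simp [picardFuchs, picardFuchsSource, constantCoeff_qd]
  · have hrec := coeff_I0_succ n
    simp only [picardFuchs, picardFuchsSource, map_sub, map_add, map_neg, coeff_succ_X_mul,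
      coeff_ofNat_mul, coeff_qd, mul_assoc]
    simp only [I1a, I0, coeff_mk, harmonic_five_mul_succ] at hrec ⊢
    set H := ∑ j ∈ Finset.Icc 1 (5 * n), (1 : ℚ) / j
    push_cast at hrec ⊢
    linear_combination (norm := skip) (1 / ((n : ℚ) + 1) - 5 * (H + (1 / (5 * (n : ℚ) + 1) +
      1 / (5 * n + 2) + 1 / (5 * n + 3) + 1 / (5 * n + 4) + 1 / (5 * n + 5)))) * hrec
    field_simp
    ring

/-- `W₀` and `W₁` are the homogeneous quadratic forms (in `y₀ = y`, `y₁ = θy`, `y₂ = θ²y`) of the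
first integral `firstIntegral` of the pair `picardFuchs y = 0`,
`5 * picardFuchs (f * y) = -picardFuchsSource y`. -/
def W₀ {R : Type*} [CommRing R] (y₀ y₁ y₂ f₁ f₂ f₃ : R) : R :=
  50 * y₀ ^ 2 * f₃ + (100 * y₀ * y₁ + 50 * y₀ ^ 2) * f₂ +
    (200 * y₀ * y₂ - 100 * y₁ ^ 2 + 100 * y₀ * y₁ + 20 * y₀ ^ 2) * f₁ +
    20 * y₁ ^ 2 - 40 * y₀ * y₂ - 20 * y₀ * y₁ - 4 * y₀ ^ 2

def W₁ {R : Type*} [CommRing R] (y₀ y₁ y₂ f₁ f₂ : R) : R :=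
  50 * y₀ ^ 2 * f₂ + (100 * y₀ * y₁ + 20 * y₀ ^ 2) * f₁ +
    25 * y₁ ^ 2 - 50 * y₀ * y₂ - 20 * y₀ * y₁ - 4 * y₀ ^ 2

def firstIntegral (y f : ℚ⟦X⟧) : ℚ⟦X⟧ :=
  (1 - 3125 * X) * W₀ y (θ y) (θ (θ y)) (θ f) (θ (θ f)) (θ (θ (θ f))) -
    W₁ y (θ y) (θ (θ y)) (θ f) (θ (θ f))

theorem qd_firstIntegral {y f : ℚ⟦X⟧} (hy : picardFuchs y = 0)
    (hf : 5 * picardFuchs (f * y) = -picardFuchsSource y) : θ (firstIntegral y f) = 0 := by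
  simp only [picardFuchs, picardFuchsSource, firstIntegral, W₀, W₁, qd_mul, qd_add, qd_sub,
    qd_pow, qd_ofNat, qd_one, qd_X] at hy hf ⊢
  linear_combination 10 * y * hf - 50 * f * y * hy

theorem firstIntegral_eq_zero {y f : ℚ⟦X⟧} (hy : picardFuchs y = 0)
    (hf : 5 * picardFuchs (f * y) = -picardFuchsSource y) : firstIntegral y f = 0 := by
  refine eq_zero_of_qd_eq_zero (qd_firstIntegral hy hf) ?_
  simp [firstIntegral, W₀, W₁, constantCoeff_qd]

theorem constantCoeff_I0 : constantCoeff I0 = 1 := by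
  simp [I0, ← coeff_zero_eq_constantCoeff_apply]

theorem one_sub_mul_W₀_eq_W₁ :
    (1 - 3125 * X) * W₀ 1 (θ I0 * I0⁻¹) (θ (θ I0) * I0⁻¹) I11a (θ I11a) (θ (θ I11a)) =
      W₁ 1 (θ I0 * I0⁻¹) (θ (θ I0) * I0⁻¹) I11a (θ I11a) := by
  have hI0 : I0 * I0⁻¹ = 1 := PowerSeries.mul_inv_cancel _ (by simp [constantCoeff_I0])
  have hS := firstIntegral_eq_zero (f := I1a * I0⁻¹) picardFuchs_I0
    (by rw [mul_assoc, mul_comm I0⁻¹, hI0, mul_one]; exact picardFuchs_I1a)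
  set A := θ I0 * I0⁻¹
  set B := θ (θ I0) * I0⁻¹
  have hA : θ I0 = A * I0 := by rw [mul_assoc, mul_comm I0⁻¹, hI0, mul_one]
  have hB : θ (θ I0) = B * I0 := by rw [mul_assoc, mul_comm I0⁻¹, hI0, mul_one]
  have hI0_sq : I0 ^ 2 ≠ 0 := pow_ne_zero 2 (left_ne_zero_of_mul_eq_one hI0)
  rw [← sub_eq_zero, ← mul_eq_zero_iff_left hI0_sq, ← hS, firstIntegral, hB, hA, I11a]
  simp only [W₀, W₁]
  ring

theorem W₀_eq_pow_five_mul_W₁ {L : ℚ⟦X⟧} (hL : L ^ 5 * (1 - 5 ^ 5 * X) = 1) :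
    W₀ 1 (θ I0 * I0⁻¹) (θ (θ I0) * I0⁻¹) I11a (θ I11a) (θ (θ I11a)) =
      L ^ 5 * W₁ 1 (θ I0 * I0⁻¹) (θ (θ I0) * I0⁻¹) I11a (θ I11a) := by
  linear_combination L ^ 5 * one_sub_mul_W₀_eq_W₁ -
    W₀ 1 (θ I0 * I0⁻¹) (θ (θ I0) * I0⁻¹) I11a (θ I11a) (θ (θ I11a)) * hL

theorem qd_of_pow_five_mul {L : ℚ⟦X⟧} (hL : L ^ 5 * (1 - 5 ^ 5 * X) = 1) :
    θ L = C (1 / 5) * (L * (L ^ 5 - 1)) := by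
  have h := congrArg qd hL
  simp only [qd_mul, qd_sub, qd_pow, qd_one, qd_ofNat, qd_X] at h
  have h5 : (5 : ℚ⟦X⟧) * C (1 / 5) = 1 := by rw [← map_ofNat C, ← map_mul]; norm_num
  linear_combination C (1 / 5) * L * h - C (1 / 5) * (5 * θ L + L) * hL - θ L * h5

theorem qd_inv_pow {L : ℚ⟦X⟧} (hu : L * L⁻¹ = 1) (hθL : θ L = C (1 / 5) * (L * (L ^ 5 - 1)))
    (k : ℕ) : θ (L⁻¹ ^ k) = -((k : ℚ⟦X⟧) * C (1 / 5) * (L ^ 5 - 1)) * L⁻¹ ^ k := by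
  rcases k with _ | k
  · simp [qd_one]
  · rw [qd_pow, qd_inv, hθL]
    push_cast
    linear_combination -((k + 1) * L⁻¹ ^ (k + 1) * C (1 / 5) * (L ^ 5 - 1)) * hu

theorem du_inv_pow_mul {L : ℚ⟦X⟧} (hu : L * L⁻¹ = 1)
    (hθL : θ L = C (1 / 5) * (L * (L ^ 5 - 1))) (k : ℕ) (p : ℚ⟦X⟧) :
    du L (L⁻¹ ^ k * p) = L⁻¹ ^ (k + 1) * (θ p - (k : ℚ⟦X⟧) * C (1 / 5) * (L ^ 5 - 1) * p) := by
  rw [du, qd_mul, qd_inv_pow hu hθL]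
  ring

theorem Xg_one_eq {L : ℚ⟦X⟧} (hu : L * L⁻¹ = 1) (hθL : θ L = C (1 / 5) * (L * (L ^ 5 - 1))) :
    Xg L 1 = L⁻¹ ^ 1 * (θ I0 * I0⁻¹ - C (1 / 5) * (L ^ 5 - 1)) := by
  rw [Xg, hθL]
  linear_combination -(L⁻¹ * C (1 / 5) * (L ^ 5 - 1) * hu)

theorem Zg_one_eq {L : ℚ⟦X⟧} (hu : L * L⁻¹ = 1) (hθL : θ L = C (1 / 5) * (L * (L ^ 5 - 1))) :
    Zg L 1 = L⁻¹ ^ 1 * (C (1 / 5) * L ^ 5) := by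
  rw [Zg, hθL]
  linear_combination L⁻¹ * C (1 / 5) * (L ^ 5 - 1) * hu

instance : CharZero (LaurentSeries ℚ) :=
  charZero_of_injective_algebraMap (algebraMap ℚ _).injective

theorem ofPowerSeries_C_eq_ratCast (r : ℚ) :
    HahnSeries.ofPowerSeries ℤ ℚ (C r) = (r : LaurentSeries ℚ) := by
  rw [HahnSeries.ofPowerSeries_C]
  exact eq_ratCast HahnSeries.C r

/-- The second-order differential identity for the extra generator `𝒬`:
`(d/du)²𝒬 = -2𝒳·(d/du)𝒬 - (4𝒳₂ + 2𝒳² + (15/4)𝒵₂)·𝒬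
  - (5/2)(2𝒵₁𝒳₂ + 𝒵₁𝒳² + 𝒵₂𝒳) - (125/24)𝒵₁𝒵₂ - (5/24)𝒵₃`. -/
theorem statement6 (L : PowerSeries ℚ)
    (hc : PowerSeries.constantCoeff L = 1)
    (hL : L ^ 5 * (1 - 5 ^ 5 * PowerSeries.X) = 1) :
    du L (du L (Qg L)) =
      -2 * Xg L 1 * du L (Qg L)
        - (4 * Xg L 2 + 2 * (Xg L 1) ^ 2 + PowerSeries.C (15 / 4 : ℚ) * Zg L 2) * Qg L
        - PowerSeries.C (5 / 2 : ℚ) *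
            (2 * Zg L 1 * Xg L 2 + Zg L 1 * (Xg L 1) ^ 2 + Zg L 2 * Xg L 1)
        - PowerSeries.C (125 / 24 : ℚ) * Zg L 1 * Zg L 2
        - PowerSeries.C (5 / 24 : ℚ) * Zg L 3 := by
  have hu : L * L⁻¹ = 1 := PowerSeries.mul_inv_cancel L (by simp [hc])
  have hθL := qd_of_pow_five_mul hL
  have hrel := congrArg (HahnSeries.ofPowerSeries ℤ ℚ) (W₀_eq_pow_five_mul_W₁ hL)
  rw [show Xg L 2 = du L (Xg L 1) from rfl, show Zg L 3 = du L (du L (Zg L 1)) from rfl,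
    show Zg L 2 = du L (Zg L 1) from rfl,
    show Qg L = L⁻¹ ^ 1 * (I11a - C (1 / 5)) by rw [pow_one]; rfl,
    Xg_one_eq hu hθL, Zg_one_eq hu hθL]
  simp only [du_inv_pow_mul hu hθL, qd_add, qd_sub, qd_mul, qd_inv, qd_pow, qd_C, qd_natCast,
    qd_zero, qd_one, hθL]
  -- `ring` needs the rational constants `C r` to live in a field: pass to Laurent series.
  apply HahnSeries.ofPowerSeries_injective (Γ := ℤ)
  simp only [W₀, W₁, map_mul, map_sub, map_add, map_neg, map_pow, map_ofNat, map_one, map_natCast,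
    ofPowerSeries_C_eq_ratCast] at hrel ⊢
  push_cast
  linear_combination HahnSeries.ofPowerSeries ℤ ℚ L⁻¹ ^ 3 / 50 * hrel

end
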